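/- Let (M, D) be a Steiner forest instance and let (M', D') be obtained from it by removing one demand pair, with clustering hierarchies (𝒞'_i, H'_i) and (𝒞_i, H_i) from the clustering procedure on the two instances. Fix a level i and let F̂' be any spanning forest of H'_i. Call an edge (C_1, C_2) ∈ F̂' inheritable if C_1 and C_2 lie in distinct clusters of 𝒞_i; call a virtual edge (D_1, D_2) of H_i inherited if there is an inheritable (C_1, C_2) ∈ F̂' with C_1 ⊆ D_1 and C_2 ⊆ D_2. Let 𝒞_{inh,i} be the clustering consisting of the i-inactive clusters of 𝒞_i together with, for each connected component Q of the subgraph of H_i formed by the inherited edges (on the full vertex set of H_i), the cluster ⋃_{C ∈ Q} C. Then 𝒞'_{i+1} ⪯ 𝒞_{inh,i}. -/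

import Mathlib

open Finset

/-- A Steiner forest instance with `n` demand pairs: a metric on the `2n` terminals
`Fin n × Bool` in which all distances between distinct points are at least `1`.
The `i`-th demand pair is `((i, false), (i, true))`. -/
structure SFI (n : ℕ) where
  dist : Fin n × Bool → Fin n × Bool → ℝ
  dist_self : ∀ x, dist x x = 0
  dist_symm : ∀ x y, dist x y = dist y x
  dist_triangle : ∀ x y z, dist x z ≤ dist x y + dist y z
  one_le_dist : ∀ x y, x ≠ y → 1 ≤ dist x y

namespace SFI

/-- Terminals. -/
abbrev Pt (n : ℕ) := Fin n × Bool

variable {n : ℕ}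

/-- The mate of a terminal. -/
def mate (v : Pt n) : Pt n := (v.1, !v.2)

/-- `level v = ⌈log₂ dist(v, mate v)⌉`. -/
noncomputable def level (M : SFI n) (v : Pt n) : ℕ :=
  ⌈Real.logb 2 (M.dist v (mate v))⌉₊

/-- The level of a cluster: maximum level of its terminals. -/
noncomputable def clLevel (M : SFI n) (C : Set (Pt n)) : ℕ := sSup (M.level '' C)

/-- A cluster is `i`-active if its level is at least `i`. -/
def Active (M : SFI n) (i : ℕ) (C : Set (Pt n)) : Prop := i ≤ M.clLevel C

/-- `L`, the maximum level of a terminal. -/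
noncomputable def maxLevel (M : SFI n) : ℕ := sSup (Set.range M.level)

/-- The contracted metric `M/𝒞`: the distance between clusters `C, C'` is the minimum over
sequences of clusters `C = Q_0, …, Q_k = C'` and points `x_j ∈ Q_{j-1}`, `y_j ∈ Q_j`
of `∑ dist (x j) (y j)`. -/
noncomputable def cDist (M : SFI n) (𝒞 : Set (Set (Pt n))) (C C' : Set (Pt n)) : ℝ :=
  sInf {s | ∃ (k : ℕ) (Q : Fin (k+1) → Set (Pt n)) (x y : Fin k → Pt n),
    (∀ j, Q j ∈ 𝒞) ∧ Q 0 = C ∧ Q (Fin.last k) = C' ∧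
    (∀ j : Fin k, x j ∈ Q j.castSucc ∧ y j ∈ Q j.succ) ∧
    s = ∑ j, M.dist (x j) (y j)}

/-- Adjacency of the virtual graph `H_i` on a clustering `𝒞`: two distinct `i`-active
clusters of `𝒞` are adjacent iff their distance in `M/𝒞` is `< 2^(i+1)`
(the distance is symmetric; both directions are recorded to make symmetry definitional). -/
def hRel (M : SFI n) (𝒞 : Set (Set (Pt n))) (i : ℕ) (C₁ C₂ : Set (Pt n)) : Prop :=
  C₁ ∈ 𝒞 ∧ C₂ ∈ 𝒞 ∧ C₁ ≠ C₂ ∧ M.Active i C₁ ∧ M.Active i C₂ ∧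
    M.cDist 𝒞 C₁ C₂ < 2 ^ (i+1) ∧ M.cDist 𝒞 C₂ C₁ < 2 ^ (i+1)

/-- One step of the clustering procedure: keep the `i`-inactive clusters, and merge each
connected component of the virtual graph `H_i` into a single cluster. -/
def step (M : SFI n) (𝒞 : Set (Set (Pt n))) (i : ℕ) : Set (Set (Pt n)) :=
  {C | C ∈ 𝒞 ∧ ¬ M.Active i C} ∪
  {D | ∃ C, C ∈ 𝒞 ∧ M.Active i C ∧
    D = ⋃₀ {C' | Relation.ReflTransGen (M.hRel 𝒞 i) C C'}}

/-- The clustering hierarchy of the instance restricted to the terminal set `S`: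
`𝒞_0` is the trivial clustering of `S`; `𝒞_{i+1}` is obtained from `𝒞_i` by merging the
connected components of `H_i`. (For `i` beyond the top level this is constant.) -/
def clusterings (M : SFI n) (S : Set (Pt n)) : ℕ → Set (Set (Pt n))
  | 0 => {C | ∃ v ∈ S, C = {v}}
  | (i+1) => M.step (M.clusterings S i) i

/-- The virtual graph `H_i` as a simple graph on clusters. -/
def virtG (M : SFI n) (S : Set (Pt n)) (i : ℕ) : SimpleGraph (Set (Pt n)) where
  Adj C₁ C₂ := M.hRel (M.clusterings S i) i C₁ C₂
  symm := ⟨by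
    rintro C₁ C₂ ⟨h1, h2, h3, h4, h5, h6, h7⟩
    exact ⟨h2, h1, h3.symm, h5, h4, h7, h6⟩⟩
  loopless := ⟨by
    rintro C ⟨h1, h2, h3, _⟩
    exact h3 rfl⟩

/-- Cost of an edge of the complete graph on the terminals. -/
noncomputable def ecost (M : SFI n) (e : Sym2 (Pt n)) : ℝ :=
  Sym2.lift ⟨M.dist, M.dist_symm⟩ e

/-- Cost of a set of edges. -/
noncomputable def cost (M : SFI n) (F : Finset (Sym2 (Pt n))) : ℝ := ∑ e ∈ F, M.ecost e

/-- A set of edges is feasible if every demand pair is connected by it. -/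
def Feasible (M : SFI n) (F : Finset (Sym2 (Pt n))) : Prop :=
  ∀ i : Fin n,
    (SimpleGraph.fromEdgeSet (F : Set (Sym2 (Pt n)))).Reachable (i, false) (i, true)

/-- The optimum cost of a feasible solution. -/
noncomputable def OPT (M : SFI n) : ℝ := sInf {x | ∃ F, M.Feasible F ∧ M.cost F = x}

end SFI

namespace SFI

variable {n : ℕ}

/-- `F` is a spanning forest of the graph `H`: an acyclic subgraph whose connected
components coincide with those of `H`. -/
def IsSpanningForest {α : Type*} (H F : SimpleGraph α) : Prop :=
  F ≤ H ∧ F.IsAcyclic ∧ ∀ a b, F.Reachable a b ↔ H.Reachable a b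

/-- The subgraph of the virtual graph `H_i` (of the instance restricted to `S`) formed by
the edges inherited from the forest `F'`: a virtual edge `(D₁, D₂)` of `H_i` is inherited
if some edge `(C₁, C₂)` of `F'` has `C₁ ⊆ D₁` and `C₂ ⊆ D₂` (with `D₁ ≠ D₂`, which is
implied by adjacency in `H_i`). -/
def inhG (M : SFI n) (S : Set (Pt n)) (i : ℕ)
    (F' : SimpleGraph (Set (Pt n))) : SimpleGraph (Set (Pt n)) where
  Adj D₁ D₂ := (M.virtG S i).Adj D₁ D₂ ∧ ∃ C₁ C₂, F'.Adj C₁ C₂ ∧ C₁ ⊆ D₁ ∧ C₂ ⊆ D₂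
  symm := ⟨by
    rintro D₁ D₂ ⟨h, C₁, C₂, hF, hc₁, hc₂⟩
    exact ⟨(M.virtG S i).adj_symm h, C₂, C₁, F'.adj_symm hF, hc₂, hc₁⟩⟩
  loopless := ⟨fun D h => (M.virtG S i).irrefl h.1⟩

/-- The clustering `𝒞_{inh,i}`: the `i`-inactive clusters of `𝒞_i` together with, for each
connected component `Q` of the inherited subgraph (on the full vertex set of `H_i`),
the cluster `⋃_{C ∈ Q} C`. -/
def inhClustering (M : SFI n) (S : Set (Pt n)) (i : ℕ)
    (F' : SimpleGraph (Set (Pt n))) : Set (Set (Pt n)) :=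
  {C | C ∈ M.clusterings S i ∧ ¬ M.Active i C} ∪
  {D | ∃ C, C ∈ M.clusterings S i ∧ M.Active i C ∧
    D = ⋃₀ {C' | (M.inhG S i F').Reachable C C'}}

/- Auxiliary lemmas -/

lemma dist_nonneg' (M : SFI n) (x y : Pt n) : 0 ≤ M.dist x y := by
  have h1 := M.dist_triangle x y x
  have h2 := M.dist_self x
  have h3 := M.dist_symm y x
  linarith

/-- Activity is monotone under cluster inclusion. -/
lemma active_mono (M : SFI n) {C D : Set (Pt n)} (h : C ⊆ D) {i : ℕ}
    (hA : M.Active i C) : M.Active i D := by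
  rcases Nat.eq_zero_or_pos i with rfl | hi
  · exact Nat.zero_le _
  · have hCne : (M.level '' C).Nonempty := by
      by_contra h'
      rw [Set.not_nonempty_iff_eq_empty] at h'
      have hz : M.clLevel C = 0 := by simp [clLevel, h']
      rw [Active, hz] at hA
      omega
    have hbdd : BddAbove (M.level '' D) := (Set.toFinite _).bddAbove
    exact le_trans hA (csSup_le_csSup hbdd hCne (Set.image_mono h))

/-- Contracted distance is monotone under coarsening of the clustering. -/
lemma cDist_mono (M : SFI n) {𝒞' 𝒞 : Set (Set (Pt n))}
    (href : ∀ B ∈ 𝒞', ∃ D ∈ 𝒞, B ⊆ D)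
    {C₁ C₂ D₁ D₂ : Set (Pt n)}
    (m₁ : C₁ ∈ 𝒞') (m₂ : C₂ ∈ 𝒞') (hCne : C₁ ≠ C₂)
    (hn₁ : C₁.Nonempty) (hn₂ : C₂.Nonempty)
    (hd₁ : D₁ ∈ 𝒞) (hd₂ : D₂ ∈ 𝒞) (hs₁ : C₁ ⊆ D₁) (hs₂ : C₂ ⊆ D₂) :
    M.cDist 𝒞 D₁ D₂ ≤ M.cDist 𝒞' C₁ C₂ := by
  choose! f hf₁ hf₂ using href
  apply csInf_le_csInf
  · refine ⟨0, ?_⟩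
    rintro s ⟨k, Q, x, y, -, -, -, -, rfl⟩
    exact Finset.sum_nonneg fun j _ => M.dist_nonneg' _ _
  · obtain ⟨a, ha⟩ := hn₁
    obtain ⟨b, hb⟩ := hn₂
    refine ⟨M.dist a b, 1, ![C₁, C₂], ![a], ![b], ?_, rfl, rfl, ?_, by simp⟩
    · intro p; fin_cases p
      · exact m₁
      · exact m₂
    · intro p; fin_cases p
      · exact ⟨ha, hb⟩
  · rintro s ⟨k, Q, x, y, hQ, hQ0, hQl, hxy, rfl⟩
    have hk : k ≠ 0 := by
      rintro rfl
      have h0 : Fin.last 0 = (0 : Fin 1) := rfl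
      exact hCne (by rw [← hQ0, ← hQl, h0])
    have hlast : (Fin.last k) ≠ (0 : Fin (k+1)) := by
      simp [Fin.ext_iff, hk]
    refine ⟨k, (fun p => if p = 0 then D₁ else if p = Fin.last k then D₂ else f (Q p)),
      x, y, ?_, by simp, by simp [hlast], ?_, rfl⟩
    · intro p
      dsimp only
      split_ifs with h h'
      · exact hd₁
      · exact hd₂
      · exact hf₁ _ (hQ p)
    · have hsub : ∀ p, Q p ⊆ (fun p => if p = 0 then D₁ else
          if p = Fin.last k then D₂ else f (Q p)) p := by
        intro p
        dsimp only
        split_ifs with h h'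
        · rw [h, hQ0]; exact hs₁
        · rw [h', hQl]; exact hs₂
        · exact hf₂ _ (hQ p)
      exact fun p => ⟨hsub _ (hxy p).1, hsub _ (hxy p).2⟩

/-- Every cluster of the clustering hierarchy is nonempty. -/
lemma cluster_nonempty (M : SFI n) (S : Set (Pt n)) :
    ∀ i, ∀ B ∈ M.clusterings S i, B.Nonempty := by
  intro i
  induction i with
  | zero => rintro B ⟨v, hv, rfl⟩; exact ⟨v, rfl⟩
  | succ i ih =>
    rintro B (⟨hB, -⟩ | ⟨C, hC, -, rfl⟩)
    · exact ih B hB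
    · exact Set.Nonempty.mono
        (Set.subset_sUnion_of_mem (Relation.ReflTransGen.refl)) (ih C hC)

/-- Lifting a virtual edge to the coarser clustering. -/
lemma hRel_lift (M : SFI n) {𝒞' 𝒞 : Set (Set (Pt n))}
    (href : ∀ B ∈ 𝒞', ∃ D ∈ 𝒞, B ⊆ D)
    (hnon : ∀ B ∈ 𝒞', B.Nonempty)
    {i : ℕ} {C₁ C₂ D₁ D₂ : Set (Pt n)}
    (h : M.hRel 𝒞' i C₁ C₂)
    (hd₁ : D₁ ∈ 𝒞) (hs₁ : C₁ ⊆ D₁) (hd₂ : D₂ ∈ 𝒞) (hs₂ : C₂ ⊆ D₂)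
    (hne : D₁ ≠ D₂) : M.hRel 𝒞 i D₁ D₂ := by
  obtain ⟨m₁, m₂, hCne, a₁, a₂, d₁, d₂⟩ := h
  exact ⟨hd₁, hd₂, hne, M.active_mono hs₁ a₁, M.active_mono hs₂ a₂,
    lt_of_le_of_lt (M.cDist_mono href m₁ m₂ hCne (hnon _ m₁) (hnon _ m₂) hd₁ hd₂ hs₁ hs₂) d₁,
    lt_of_le_of_lt (M.cDist_mono href m₂ m₁ (Ne.symm hCne) (hnon _ m₂) (hnon _ m₁)
      hd₂ hd₁ hs₂ hs₁) d₂⟩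

/-- The clustering of the restricted instance refines that of the full instance. -/
lemma refines (M : SFI n) (S : Set (Pt n)) :
    ∀ i, ∀ B ∈ M.clusterings S i, ∃ D ∈ M.clusterings Set.univ i, B ⊆ D := by
  intro i
  induction i with
  | zero =>
    rintro B ⟨v, hv, rfl⟩
    exact ⟨{v}, ⟨v, Set.mem_univ v, rfl⟩, subset_rfl⟩
  | succ i ih =>
    have hnon := M.cluster_nonempty S i
    rintro B (⟨hB, -⟩ | ⟨C, hC, hact, rfl⟩)
    · obtain ⟨D, hD, hsub⟩ := ih B hB
      by_cases hDa : M.Active i D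
      · exact ⟨⋃₀ {E | Relation.ReflTransGen (M.hRel (M.clusterings Set.univ i) i) D E},
          Or.inr ⟨D, hD, hDa, rfl⟩,
          hsub.trans (Set.subset_sUnion_of_mem Relation.ReflTransGen.refl)⟩
      · exact ⟨D, Or.inl ⟨hD, hDa⟩, hsub⟩
    · obtain ⟨D, hD, hsub⟩ := ih C hC
      refine ⟨⋃₀ {E | Relation.ReflTransGen (M.hRel (M.clusterings Set.univ i) i) D E},
        Or.inr ⟨D, hD, M.active_mono hsub hact, rfl⟩, ?_⟩
      apply Set.sUnion_subset
      rintro B' (hB' : Relation.ReflTransGen _ C B')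
      have key : ∃ E ∈ M.clusterings Set.univ i, B' ⊆ E ∧
          Relation.ReflTransGen (M.hRel (M.clusterings Set.univ i) i) D E := by
        induction hB' with
        | refl => exact ⟨D, hD, hsub, Relation.ReflTransGen.refl⟩
        | tail hb e ihb =>
          obtain ⟨E, hE, hsubE, hRE⟩ := ihb
          obtain ⟨Ec, hEc, hcEc⟩ := ih _ e.2.1
          by_cases hEE : E = Ec
          · exact ⟨Ec, hEc, hcEc, hEE ▸ hRE⟩
          · exact ⟨Ec, hEc, hcEc,
              hRE.tail (M.hRel_lift ih hnon e hE hsubE hEc hcEc hEE)⟩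
      obtain ⟨E, hE, hsubE, hRE⟩ := key
      exact hsubE.trans (Set.subset_sUnion_of_mem hRE)

/-- Lifting reachability in `F'` to reachability in the inherited graph. -/
lemma inh_reach (M : SFI n) (S : Set (Pt n)) (i : ℕ) (F' : SimpleGraph (Set (Pt n)))
    (hle : F' ≤ M.virtG S i) {A B : Set (Pt n)} (p : F'.Walk A B) :
    ∀ DA ∈ M.clusterings Set.univ i, A ⊆ DA →
      ∃ DB ∈ M.clusterings Set.univ i, B ⊆ DB ∧
        (M.inhG Set.univ i F').Reachable DA DB := by
  induction p with
  | nil => exact fun DA hDA hsub => ⟨DA, hDA, hsub, SimpleGraph.Reachable.rfl⟩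
  | @cons A A' B hadj p ihp =>
    intro DA hDA hsub
    have hA' : M.hRel (M.clusterings S i) i A A' := hle hadj
    obtain ⟨DA', hDA', hsubA'⟩ := M.refines S i A' hA'.2.1
    by_cases hEq : DA = DA'
    · obtain ⟨DB, hDB, hsubB, hR⟩ := ihp DA' hDA' hsubA'
      exact ⟨DB, hDB, hsubB, hEq ▸ hR⟩
    · have hedge : (M.inhG Set.univ i F').Adj DA DA' := by
        refine ⟨?_, A, A', hadj, hsub, hsubA'⟩
        exact M.hRel_lift (M.refines S i) (M.cluster_nonempty S i) hA'
          hDA hsub hDA' hsubA' hEq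
      obtain ⟨DB, hDB, hsubB, hR⟩ := ihp DA' hDA' hsubA'
      exact ⟨DB, hDB, hsubB, (hedge.reachable).trans hR⟩

end SFI

/-- Let `(M', D')` be obtained from `(M, D)` by removing the demand pair
with index `j`. Fix a level `i` and let `F'` be any spanning forest of `H'_i`. Then
`𝒞'_{i+1} ⪯ 𝒞_{inh,i}`, where `𝒞_{inh,i}` is obtained from `𝒞_i` by merging the connected
components of the subgraph of `H_i` formed by the edges inherited from `F'`. -/
theorem stmt7 (n : ℕ) (M : SFI n) (j : Fin n) (i : ℕ)
    (F' : SimpleGraph (Set (SFI.Pt n)))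
    (hF' : SFI.IsSpanningForest (M.virtG {v : SFI.Pt n | v.1 ≠ j} i) F') :
    ∀ C' ∈ M.clusterings {v : SFI.Pt n | v.1 ≠ j} (i + 1),
      ∃ D ∈ M.inhClustering Set.univ i F', C' ⊆ D := by
  intro C' hC'
  set S : Set (SFI.Pt n) := {v : SFI.Pt n | v.1 ≠ j} with hS
  rcases hC' with ⟨hC'mem, hC'inact⟩ | ⟨C, hC, hact, rfl⟩
  · obtain ⟨D, hD, hsub⟩ := M.refines S i C' hC'mem
    by_cases hDa : M.Active i D
    · exact ⟨⋃₀ {E | (M.inhG Set.univ i F').Reachable D E},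
        Or.inr ⟨D, hD, hDa, rfl⟩,
        hsub.trans (Set.subset_sUnion_of_mem SimpleGraph.Reachable.rfl)⟩
    · exact ⟨D, Or.inl ⟨hD, hDa⟩, hsub⟩
  · obtain ⟨D, hD, hsub⟩ := M.refines S i C hC
    refine ⟨⋃₀ {E | (M.inhG Set.univ i F').Reachable D E},
      Or.inr ⟨D, hD, M.active_mono hsub hact, rfl⟩, ?_⟩
    apply Set.sUnion_subset
    rintro B (hB : Relation.ReflTransGen _ C B)
    have hreach : F'.Reachable C B := by
      induction hB with
      | refl => exact SimpleGraph.Reachable.rfl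
      | tail hb e ihb =>
        exact ihb.trans ((hF'.2.2 _ _).mpr
          (SimpleGraph.Adj.reachable (show (M.virtG S i).Adj _ _ from e)))
    obtain ⟨p⟩ := hreach
    obtain ⟨DB, hDB, hsubB, hR⟩ := M.inh_reach S i F' hF'.1 p D hD hsub
    exact hsubB.trans (Set.subset_sUnion_of_mem hR)
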